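/- For every integer n ≥ 1 and every real R > 0 there exists a constant c > 0 such that for every real λ ≥ 1 and every y ∈ ℂⁿ with ‖y‖ ≤ R one has λ^{2n} · ∫_{{z ∈ ℂⁿ : ‖z‖ < 1/λ}} |log ‖y − z‖| dz ≤ c + c · log λ, and if moreover y ≠ 0 then λ^{2n} · ∫_{{z ∈ ℂⁿ : ‖z‖ < 1/λ}} |log ‖y − z‖| dz ≤ c + c · min( log λ, |log ‖y‖| ). -/

import Mathlib

/-!
Split according to whether `‖y‖ ≥ 2/λ`. If so, `‖y‖/2 ≤ ‖y - z‖ ≤ ‖y‖ + 1` on the ball, so the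
integrand is at most `|log ‖y‖| + log 2`, and `|log ‖y‖| ≤ |log R| + log λ`. Otherwise the ball
lies in the ball of radius `3/λ` about `y`, and over a ball of radius `s` the mean of
`|log ‖w‖|` is at most `|log s| + 1`: by the layer-cake formula, since `log (s/‖w‖) > t` only on the
ball of radius `s e^{-t}`, the mean of `log (s/‖w‖)` is at most `∫₀^∞ e^{-t} dt = 1`.
-/

open MeasureTheory

noncomputable def euclideanNormC {n : ℕ} (z : Fin n → ℂ) : ℝ :=
  ‖(WithLp.equiv 2 (Fin n → ℂ)).symm z‖

theorem Real.abs_log_le_abs_log_add_log_two {a b : ℝ} (ha : 0 < a) (hb₁ : a / 2 ≤ b)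
    (hb₂ : b ≤ a + 1) : |Real.log b| ≤ |Real.log a| + Real.log 2 := by
  have hb : 0 < b := by linarith
  have hlow : Real.log a - Real.log 2 ≤ Real.log b := by
    rw [← Real.log_div ha.ne' two_ne_zero]; exact Real.log_le_log (by positivity) hb₁
  have hup : Real.log b ≤ |Real.log a| + Real.log 2 := by
    rcases le_total a 1 with ha1 | ha1
    · linarith [Real.log_le_log hb (show b ≤ 2 by linarith), abs_nonneg (Real.log a)]
    · have := Real.log_le_log hb (show b ≤ 2 * a by linarith)
      rw [Real.log_mul two_ne_zero ha.ne'] at this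
      linarith [le_abs_self (Real.log a)]
  rw [abs_le]
  constructor <;> linarith [neg_abs_le (Real.log a)]

open Metric Set Module

namespace MeasureTheory

theorem setIntegral_le_mul_measureReal_of_lintegral_le {α : Type*} [MeasurableSpace α]
    {μ : Measure α} {s : Set α} {f : α → ℝ} {b : ℝ} (hs : μ s ≠ ⊤) (hf : ∀ x, 0 ≤ f x)
    (hb : 0 ≤ b) (h : ∫⁻ x in s, ENNReal.ofReal (f x) ∂μ ≤ ENNReal.ofReal b * μ s) :
    ∫ x in s, f x ∂μ ≤ b * μ.real s := by
  by_cases hm : AEStronglyMeasurable f (μ.restrict s)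
  · rw [integral_eq_lintegral_of_nonneg_ae (ae_of_all _ hf) hm]
    refine ENNReal.toReal_le_of_le_ofReal (by positivity) (h.trans_eq ?_)
    rw [ENNReal.ofReal_mul hb, ofReal_measureReal hs]
  · rw [integral_non_aestronglyMeasurable hm]
    positivity

theorem lintegral_abs_log_norm_sub_ball_le_of_le_norm {E : Type*} [SeminormedAddCommGroup E]
    [MeasurableSpace E] [OpensMeasurableSpace E] (μ : Measure E) {x : E} {r : ℝ} (hr : 0 < r)
    (hr₁ : r ≤ 1) (hx : 2 * r ≤ ‖x‖) :
    ∫⁻ w in ball 0 r, ENNReal.ofReal |Real.log ‖x - w‖| ∂μ ≤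
      ENNReal.ofReal (|Real.log ‖x‖| + Real.log 2) * μ (ball 0 r) := by
  rw [← setLIntegral_const]
  refine setLIntegral_mono' measurableSet_ball fun w hw ↦ ENNReal.ofReal_le_ofReal ?_
  have hw := mem_ball_zero_iff.1 hw
  refine Real.abs_log_le_abs_log_add_log_two (by linarith) ?_ ?_
  · linarith [norm_sub_norm_le x w]
  · linarith [norm_sub_le x w]

end MeasureTheory

namespace MeasureTheory.Measure

variable {E : Type*} [NormedAddCommGroup E] [NormedSpace ℝ E] [MeasurableSpace E] [BorelSpace E]
  [FiniteDimensional ℝ E] (μ : Measure E) [μ.IsAddHaarMeasure]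

theorem measureReal_ball_of_pos (x : E) {r : ℝ} (hr : 0 < r) :
    μ.real (ball x r) = r ^ finrank ℝ E * μ.real (ball 0 1) := by
  rw [measureReal_def, μ.addHaar_ball_of_pos x hr, ENNReal.toReal_mul,
    ENNReal.toReal_ofReal (by positivity), measureReal_def]

theorem measure_ball_inter_lt_log_sub_log_norm_le [Nontrivial E] {s t : ℝ} (hs : 0 < s)
    (ht : 0 ≤ t) :
    μ (ball 0 s ∩ {w | t < Real.log s - Real.log ‖w‖}) ≤
      ENNReal.ofReal (Real.exp (-t)) * μ (ball 0 s) := by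
  have hsub : ball 0 s ∩ {w | t < Real.log s - Real.log ‖w‖} ⊆
      ball (0 : E) (Real.exp (-t) * s) ∪ {0} := by
    rintro w ⟨-, hw⟩
    rcases eq_or_ne w 0 with rfl | hw0
    · exact Or.inr rfl
    · refine Or.inl (mem_ball_zero_iff.2 ?_)
      rw [← Real.log_lt_log_iff (norm_pos_iff.2 hw0) (by positivity),
        Real.log_mul (Real.exp_pos _).ne' hs.ne', Real.log_exp]
      rw [mem_ofPred_eq] at hw
      linarith
  calc μ (ball 0 s ∩ {w | t < Real.log s - Real.log ‖w‖})
      ≤ μ (ball (0 : E) (Real.exp (-t) * s)) := (measure_mono hsub).trans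
        ((measure_union_le _ _).trans (by rw [measure_singleton, add_zero]))
    _ = ENNReal.ofReal (Real.exp (-t) ^ finrank ℝ E) * μ (ball 0 s) :=
        μ.addHaar_ball_mul_of_pos 0 (Real.exp_pos _) s
    _ ≤ ENNReal.ofReal (Real.exp (-t)) * μ (ball 0 s) := by
        gcongr
        exact pow_le_of_le_one (Real.exp_pos _).le (Real.exp_le_one_iff.2 (by linarith))
          finrank_pos.ne'

theorem lintegral_log_sub_log_norm_ball_le [Nontrivial E] {s : ℝ} (hs : 0 < s) :
    ∫⁻ w in ball 0 s, ENNReal.ofReal (Real.log s - Real.log ‖w‖) ∂μ ≤ μ (ball 0 s) := by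
  have hmeas : Measurable fun w : E ↦ Real.log s - Real.log ‖w‖ := by fun_prop
  have hnonneg : 0 ≤ᵐ[μ.restrict (ball 0 s)] fun w ↦ Real.log s - Real.log ‖w‖ := by
    filter_upwards [ae_restrict_mem measurableSet_ball, ae_restrict_of_ae (μ.ae_ne 0)] with w hw hw0
    exact sub_nonneg.2 (Real.log_le_log (norm_pos_iff.2 hw0) (mem_ball_zero_iff.1 hw).le)
  rw [lintegral_eq_lintegral_meas_lt _ hnonneg hmeas.aemeasurable]
  calc ∫⁻ t in Ioi 0, μ.restrict (ball 0 s) {w | t < Real.log s - Real.log ‖w‖}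
      ≤ ∫⁻ t in Ioi 0, ENNReal.ofReal (Real.exp (-t)) * μ (ball 0 s) := by
        refine setLIntegral_mono' measurableSet_Ioi fun t ht ↦ ?_
        rw [Measure.restrict_apply (measurableSet_lt measurable_const hmeas), inter_comm]
        exact μ.measure_ball_inter_lt_log_sub_log_norm_le hs (le_of_lt ht)
    _ = μ (ball 0 s) := by
        rw [lintegral_mul_const _ (by fun_prop), ← ofReal_integral_eq_lintegral_ofReal
          (integrableOn_exp_neg_Ioi 0) (ae_of_all _ fun t ↦ (Real.exp_pos _).le),
          integral_exp_neg_Ioi_zero, ENNReal.ofReal_one, one_mul]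

theorem lintegral_abs_log_norm_ball_le {s : ℝ} (hs : 0 < s) :
    ∫⁻ w in ball 0 s, ENNReal.ofReal |Real.log ‖w‖| ∂μ ≤
      ENNReal.ofReal (|Real.log s| + 1) * μ (ball 0 s) := by
  rcases subsingleton_or_nontrivial E with hE | hE
  · simp [Subsingleton.elim _ (0 : E)]
  have hpt : ∀ᵐ w ∂μ.restrict (ball 0 s), ENNReal.ofReal |Real.log ‖w‖| ≤
      ENNReal.ofReal |Real.log s| + ENNReal.ofReal (Real.log s - Real.log ‖w‖) := by
    filter_upwards [ae_restrict_mem measurableSet_ball, ae_restrict_of_ae (μ.ae_ne 0)]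
      with w hw hw0
    have hle := Real.log_le_log (norm_pos_iff.2 hw0) (mem_ball_zero_iff.1 hw).le
    rw [← ENNReal.ofReal_add (abs_nonneg _) (sub_nonneg.2 hle)]
    refine ENNReal.ofReal_le_ofReal (abs_le.2 ⟨?_, ?_⟩) <;>
      linarith [le_abs_self (Real.log s), neg_abs_le (Real.log s)]
  calc ∫⁻ w in ball 0 s, ENNReal.ofReal |Real.log ‖w‖| ∂μ
      ≤ ENNReal.ofReal |Real.log s| * μ (ball 0 s) +
          ∫⁻ w in ball 0 s, ENNReal.ofReal (Real.log s - Real.log ‖w‖) ∂μ := by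
        rw [← setLIntegral_const, ← lintegral_add_left measurable_const]
        exact lintegral_mono_ae hpt
    _ ≤ ENNReal.ofReal |Real.log s| * μ (ball 0 s) + μ (ball 0 s) := by
        gcongr; exact μ.lintegral_log_sub_log_norm_ball_le hs
    _ = ENNReal.ofReal (|Real.log s| + 1) * μ (ball 0 s) := by
        rw [ENNReal.ofReal_add (abs_nonneg _) zero_le_one, ENNReal.ofReal_one, add_mul, one_mul]

theorem lintegral_abs_log_norm_sub_ball_le (x : E) (r : ℝ) :
    ∫⁻ w in ball 0 r, ENNReal.ofReal |Real.log ‖x - w‖| ∂μ ≤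
      ∫⁻ v in ball 0 (r + ‖x‖), ENNReal.ofReal |Real.log ‖v‖| ∂μ := by
  have hsub : ball 0 r ⊆ (x - ·) ⁻¹' ball 0 (r + ‖x‖) := fun w hw ↦ by
    rw [mem_preimage, mem_ball_zero_iff]
    have := mem_ball_zero_iff.1 hw
    calc ‖x - w‖ ≤ ‖x‖ + ‖w‖ := norm_sub_le _ _
      _ < r + ‖x‖ := by linarith
  calc ∫⁻ w in ball 0 r, ENNReal.ofReal |Real.log ‖x - w‖| ∂μ
      ≤ ∫⁻ w in (x - ·) ⁻¹' ball 0 (r + ‖x‖), ENNReal.ofReal |Real.log ‖x - w‖| ∂μ :=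
        lintegral_mono_set hsub
    _ = ∫⁻ v in ball 0 (r + ‖x‖), ENNReal.ofReal |Real.log ‖v‖| ∂μ :=
        (measurePreserving_sub_left μ x).setLIntegral_comp_preimage_emb
          (MeasurableEquiv.subLeft x).measurableEmbedding
          (fun v ↦ ENNReal.ofReal |Real.log ‖v‖|) _

theorem lintegral_abs_log_norm_sub_ball_le_of_norm_lt {x : E} {r : ℝ} (hr : 0 < r)
    (hx : ‖x‖ < 2 * r) :
    ∫⁻ w in ball 0 r, ENNReal.ofReal |Real.log ‖x - w‖| ∂μ ≤
      ENNReal.ofReal (3 ^ finrank ℝ E * (|Real.log (3 * r)| + 1)) * μ (ball 0 r) := by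
  calc ∫⁻ w in ball 0 r, ENNReal.ofReal |Real.log ‖x - w‖| ∂μ
      ≤ ∫⁻ v in ball 0 (3 * r), ENNReal.ofReal |Real.log ‖v‖| ∂μ :=
        (μ.lintegral_abs_log_norm_sub_ball_le x r).trans
          (lintegral_mono_set (ball_subset_ball (by linarith)))
    _ ≤ ENNReal.ofReal (|Real.log (3 * r)| + 1) * μ (ball 0 (3 * r)) :=
        μ.lintegral_abs_log_norm_ball_le (by positivity)
    _ = ENNReal.ofReal (3 ^ finrank ℝ E * (|Real.log (3 * r)| + 1)) * μ (ball 0 r) := by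
        rw [μ.addHaar_ball_mul_of_pos 0 three_pos, ← mul_assoc,
          ← ENNReal.ofReal_mul (by positivity), mul_comm (|Real.log (3 * r)| + 1)]

theorem lintegral_abs_log_norm_sub_ball_one_div_le {R l : ℝ} (hl : 1 ≤ l) {x : E}
    (hx : ‖x‖ ≤ R) :
    (∫⁻ w in ball 0 (1 / l), ENNReal.ofReal |Real.log ‖x - w‖| ∂μ ≤ ENNReal.ofReal
        (3 ^ finrank ℝ E * (Real.log 6 + 1 + |Real.log R| + Real.log l)) * μ (ball 0 (1 / l))) ∧
      (x ≠ 0 → ∫⁻ w in ball 0 (1 / l), ENNReal.ofReal |Real.log ‖x - w‖| ∂μ ≤ ENNReal.ofReal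
        (3 ^ finrank ℝ E * (Real.log 6 + 1 + |Real.log R| + |Real.log ‖x‖|)) *
          μ (ball 0 (1 / l))) := by
  set r := 1 / l with hr_def
  have hr : 0 < r := by positivity
  have hlog_r : Real.log r = -Real.log l := by rw [hr_def, one_div, Real.log_inv]
  have hlog_l : 0 ≤ Real.log l := Real.log_nonneg hl
  have hlog_2 : 0 ≤ Real.log 2 := Real.log_nonneg (by norm_num)
  have hlog_6 : Real.log 6 = Real.log 2 + Real.log 3 := by
    rw [← Real.log_mul two_ne_zero three_ne_zero]; norm_num
  have hlog_R := abs_nonneg (Real.log R)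
  rcases lt_or_ge ‖x‖ (2 * r) with hnear | hfar
  · have hlog_3r : |Real.log (3 * r)| ≤ Real.log 3 + Real.log l := by
      rw [Real.log_mul three_ne_zero hr.ne', hlog_r]
      exact (abs_add_le _ _).trans_eq (by rw [abs_neg, abs_of_nonneg hlog_l,
        abs_of_nonneg (Real.log_nonneg (by norm_num))])
    have hnear_le := μ.lintegral_abs_log_norm_sub_ball_le_of_norm_lt hr hnear
    refine ⟨hnear_le.trans ?_, fun hx0 ↦ hnear_le.trans ?_⟩
    · gcongr ENNReal.ofReal (_ * ?_) * _
      linarith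
    · have hlog_x := Real.log_lt_log (norm_pos_iff.2 hx0) hnear
      rw [Real.log_mul two_ne_zero hr.ne', hlog_r] at hlog_x
      gcongr ENNReal.ofReal (_ * ?_) * _
      linarith [neg_abs_le (Real.log ‖x‖)]
  · have hx0 : 0 < ‖x‖ := by linarith
    have hlog_x : |Real.log ‖x‖| ≤ |Real.log R| + Real.log l := by
      have hlow : Real.log (2 * r) ≤ Real.log ‖x‖ := Real.log_le_log (by positivity) hfar
      rw [Real.log_mul two_ne_zero hr.ne', hlog_r] at hlow
      have hup := Real.log_le_log hx0 hx
      rw [abs_le]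
      constructor <;> linarith [le_abs_self (Real.log R)]
    have hlog_2_6 : Real.log 2 ≤ Real.log 6 := Real.log_le_log two_pos (by norm_num)
    have h3 : (1 : ℝ) ≤ 3 ^ finrank ℝ E := one_le_pow₀ (by norm_num)
    have hfar_le := lintegral_abs_log_norm_sub_ball_le_of_le_norm μ hr
      (div_le_one_of_le₀ hl (by linarith)) hfar
    refine ⟨hfar_le.trans ?_, fun _ ↦ hfar_le.trans ?_⟩ <;>
      refine mul_le_mul_left (ENNReal.ofReal_le_ofReal
        ((le_mul_of_one_le_left (by positivity) h3).trans' ?_)) _ <;>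
      linarith

theorem exists_pow_finrank_mul_setIntegral_abs_log_norm_sub_ball_le (R : ℝ) :
    ∃ c > (0 : ℝ), ∀ l : ℝ, 1 ≤ l → ∀ x : E, ‖x‖ ≤ R →
      (l ^ finrank ℝ E * ∫ w in ball 0 (1 / l), |Real.log ‖x - w‖| ∂μ ≤ c + c * Real.log l) ∧
      (x ≠ 0 → l ^ finrank ℝ E * ∫ w in ball 0 (1 / l), |Real.log ‖x - w‖| ∂μ ≤
        c + c * min (Real.log l) |Real.log ‖x‖|) := by
  set B := Real.log 6 + 1 + |Real.log R|
  set K := 3 ^ finrank ℝ E * μ.real (ball 0 1)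
  have hB : 1 ≤ B := by
    linarith [abs_nonneg (Real.log R), Real.log_nonneg (show (1 : ℝ) ≤ 6 by norm_num)]
  have hK : 0 < K := mul_pos (by positivity)
    (ENNReal.toReal_pos (measure_ball_pos μ 0 one_pos).ne' measure_ball_lt_top.ne)
  refine ⟨K * B, by positivity, fun l hl x hx ↦ ?_⟩
  have hl₀ : 0 < l := by linarith
  have hscale : l ^ finrank ℝ E * μ.real (ball (0 : E) (1 / l)) = μ.real (ball 0 1) := by
    rw [μ.measureReal_ball_of_pos 0 (by positivity), ← mul_assoc, ← mul_pow,
      mul_one_div_cancel hl₀.ne', one_pow, one_mul]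
  have hbound : ∀ s, 0 ≤ s → ∫⁻ w in ball 0 (1 / l), ENNReal.ofReal |Real.log ‖x - w‖| ∂μ ≤
      ENNReal.ofReal (3 ^ finrank ℝ E * (B + s)) * μ (ball 0 (1 / l)) →
      l ^ finrank ℝ E * ∫ w in ball 0 (1 / l), |Real.log ‖x - w‖| ∂μ ≤ K * B + K * B * s := by
    intro s hs h
    have hint := setIntegral_le_mul_measureReal_of_lintegral_le measure_ball_lt_top.ne
      (fun _ ↦ abs_nonneg _) (by positivity) h
    calc l ^ finrank ℝ E * ∫ w in ball 0 (1 / l), |Real.log ‖x - w‖| ∂μ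
        ≤ l ^ finrank ℝ E * (3 ^ finrank ℝ E * (B + s) * μ.real (ball 0 (1 / l))) := by gcongr
      _ = K * B + K * s := by rw [mul_left_comm, hscale]; ring
      _ ≤ K * B + K * B * s := by gcongr; nlinarith
  obtain ⟨h₁, h₂⟩ := μ.lintegral_abs_log_norm_sub_ball_one_div_le hl hx
  refine ⟨hbound _ (Real.log_nonneg hl) h₁,
    fun hx0 ↦ hbound _ (le_min (Real.log_nonneg hl) (abs_nonneg _)) ?_⟩
  rcases min_cases (Real.log l) |Real.log ‖x‖| with ⟨hmin, -⟩ | ⟨hmin, -⟩ <;> rw [hmin]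
  exacts [h₁, h₂ hx0]

end MeasureTheory.Measure

theorem ball_log_integral_estimate_general (n : ℕ) (R : ℝ) :
    ∃ c > (0 : ℝ), ∀ l : ℝ, 1 ≤ l → ∀ y : Fin n → ℂ, euclideanNormC y ≤ R →
      (l ^ (2 * n) *
          ∫ z in {z : Fin n → ℂ | euclideanNormC z < 1 / l},
            |Real.log (euclideanNormC (y - z))|
        ≤ c + c * Real.log l) ∧
      (y ≠ 0 →
        l ^ (2 * n) *
            ∫ z in {z : Fin n → ℂ | euclideanNormC z < 1 / l},
              |Real.log (euclideanNormC (y - z))|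
          ≤ c + c * min (Real.log l) |Real.log (euclideanNormC y)|) := by
  let μ : Measure (EuclideanSpace ℂ (Fin n)) := volume.map (WithLp.toLp 2)
  have : μ.IsAddHaarMeasure :=
    (PiLp.continuousLinearEquiv 2 ℝ (fun _ : Fin n ↦ ℂ)).symm.isAddHaarMeasure_map volume
  have hμ : MeasurePreserving (MeasurableEquiv.toLp 2 (Fin n → ℂ)) volume μ :=
    ⟨WithLp.measurable_toLp 2 _, rfl⟩
  have hdim : finrank ℝ (EuclideanSpace ℂ (Fin n)) = 2 * n := by
    rw [finrank_real_of_complex, finrank_euclideanSpace_fin]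
  obtain ⟨c, hc, h⟩ := μ.exists_pow_finrank_mul_setIntegral_abs_log_norm_sub_ball_le R
  refine ⟨c, hc, fun l hl y hy ↦ ?_⟩
  have hint : ∫ z in {z : Fin n → ℂ | euclideanNormC z < 1 / l},
      |Real.log (euclideanNormC (y - z))| =
      ∫ w in ball 0 (1 / l), |Real.log ‖WithLp.toLp 2 y - w‖| ∂μ := by
    have hset : {z : Fin n → ℂ | euclideanNormC z < 1 / l} =
        MeasurableEquiv.toLp 2 _ ⁻¹' ball 0 (1 / l) := by
      ext z; simp [euclideanNormC]
    rw [hset, ← hμ.setIntegral_preimage_emb (MeasurableEquiv.toLp 2 _).measurableEmbedding]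
    refine integral_congr_ae (ae_of_all _ fun z ↦ ?_)
    simp [euclideanNormC]
  rw [hint, ← hdim]
  exact ⟨(h l hl _ hy).1, fun hy0 ↦ (h l hl _ hy).2 (by simpa using hy0)⟩

/-- Elementary integral estimate: the normalized integral of `|log ‖y − z‖|` over the ball
of radius `1/λ` in `ℂⁿ` is bounded by `c + c·log λ`, and by
`c + c·min(log λ, |log ‖y‖|)` when `y ≠ 0`, uniformly for `‖y‖ ≤ R`. -/
theorem ball_log_integral_estimate (n : ℕ) (hn : 1 ≤ n) (R : ℝ) (hR : 0 < R) :
    ∃ c > (0 : ℝ), ∀ l : ℝ, 1 ≤ l → ∀ y : Fin n → ℂ, euclideanNormC y ≤ R →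
      (l ^ (2 * n) *
          ∫ z in {z : Fin n → ℂ | euclideanNormC z < 1 / l},
            |Real.log (euclideanNormC (y - z))|
        ≤ c + c * Real.log l) ∧
      (y ≠ 0 →
        l ^ (2 * n) *
            ∫ z in {z : Fin n → ℂ | euclideanNormC z < 1 / l},
              |Real.log (euclideanNormC (y - z))|
          ≤ c + c * min (Real.log l) |Real.log (euclideanNormC y)|) :=
  ball_log_integral_estimate_general n R
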